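/- Let λ_ess > 0 and λ < λ_ess be real numbers, μ := λ_ess − λ > 0, and let h: [R₀,∞) → [0,∞) be measurable with ∫_{R₀}^∞ h(s)² e^s ds < ∞ (weighted square-integrability modeling h ∈ L²_f). Suppose that for every δ ∈ (0,1), every k ≥ (R₀+1)(1+δ)√μ, and every R > k/((1+δ)√μ), the Agmon-type energy inequality ∫_{R₀}^{k/((1+δ)√μ)} μ(1−δ²) φ(s)² h(s)² e^{2δ√μ s} e^s ds ≤ C(R₀) + (1/R² + 2√μ/R) ∫_R^{2R} h(s)² e^{2(k−√μ s)} e^s ds holds, where φ is the standard cutoff equal to 1 on [R₀+1, R]. Then ∫_{R₀}^∞ h(s)² e^{2δ√μ s} e^s ds < ∞ for every δ ∈ (0,1); i.e., e^{δ√μ s} h ∈ L² with weight e^s. -/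

import Mathlib

/-! For `T ≥ R₀ + 1`, apply the energy inequality with `k := (1 + δ)√μ T` and a cutoff radius
`R ≥ k/√μ`. On `[R, 2R]` the factor `e^{2(k − √μ s)}` is then at most `1`, so the boundary term
is bounded by the weighted `L²` norm of `h` once `R` is large enough for its prefactor to be at
most `1`. Since the cutoff equals `1` on `[R₀ + 1, T]`, this bounds
`∫_{R₀+1}^T h² e^{2δ√μ s} eˢ ds` uniformly in `T`, and letting `T → ∞` gives integrability. -/

open MeasureTheory Real

/-- The standard Agmon cutoff: `s − R₀` on `[R₀, R₀+1]`, `1` on `[R₀+1, R]`,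
`(2R − s)/R` on `[R, 2R]`, `0` elsewhere. -/
noncomputable def agmonCutoff (R0 R : ℝ) : ℝ → ℝ := fun s =>
  if s < R0 then 0
  else if s ≤ R0 + 1 then s - R0
  else if s ≤ R then 1
  else if s ≤ 2 * R then (2 * R - s) / R
  else 0

open Set

lemma measurable_agmonCutoff (R0 R : ℝ) : Measurable (agmonCutoff R0 R) := by
  unfold agmonCutoff
  refine Measurable.ite measurableSet_Iio measurable_const ?_
  refine Measurable.ite measurableSet_Iic (by fun_prop) ?_
  refine Measurable.ite measurableSet_Iic measurable_const ?_
  exact Measurable.ite measurableSet_Iic (by fun_prop) measurable_const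

lemma agmonCutoff_mem_Icc {R0 R : ℝ} (hR : 0 < R) (s : ℝ) : agmonCutoff R0 R s ∈ Icc 0 1 := by
  unfold agmonCutoff
  split_ifs
  · simp
  · constructor <;> linarith
  · simp
  · constructor
    · exact div_nonneg (by linarith) hR.le
    · rw [div_le_one hR]; linarith
  · simp

lemma agmonCutoff_eq_one {R0 R s : ℝ} (h1 : R0 + 1 < s) (h2 : s ≤ R) :
    agmonCutoff R0 R s = 1 := by
  unfold agmonCutoff
  rw [if_neg (by linarith), if_neg (by linarith), if_pos h2]

lemma one_div_sq_add_div_le_one {c R : ℝ} (hc : 0 ≤ c) (hR : 1 + 2 * c ≤ R) :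
    1 / R ^ 2 + 2 * c / R ≤ 1 := by
  have hR0 : 0 < R := by linarith
  rw [div_add_div _ _ (by positivity) hR0.ne', div_le_one (by positivity)]
  nlinarith

lemma setIntegral_mul_le_setIntegral_of_subset {α : Type*} [MeasurableSpace α] {μ : Measure α}
    {f w : α → ℝ} {s t : Set α} (hs : MeasurableSet s) (hst : s ⊆ t)
    (hf : IntegrableOn f t μ) (hf0 : ∀ x, 0 ≤ f x) (hw0 : ∀ x, 0 ≤ w x)
    (hw1 : ∀ x ∈ s, w x ≤ 1) :
    ∫ x in s, f x * w x ∂μ ≤ ∫ x in t, f x ∂μ := calc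
  ∫ x in s, f x * w x ∂μ ≤ ∫ x in s, f x ∂μ := by
    refine integral_mono_of_nonneg (.of_forall fun x => mul_nonneg (hf0 x) (hw0 x))
      (hf.mono_set hst) ?_
    filter_upwards [ae_restrict_mem hs] with x hx
    exact mul_le_of_le_one_right (hf0 x) (hw1 x hx)
  _ ≤ ∫ x in t, f x ∂μ := setIntegral_mono_set hf (.of_forall hf0) hst.eventuallyLE

lemma integrableOn_Ioi_of_setIntegral_Ioc_le {f : ℝ → ℝ} {a C : ℝ} (hf0 : ∀ x, 0 ≤ f x)
    (hfi : ∀ b, IntegrableOn f (Ioc a b)) (hC : ∀ b, a ≤ b → ∫ x in Ioc a b, f x ≤ C) :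
    IntegrableOn f (Ioi a) := by
  refine integrableOn_Ioi_of_intervalIntegral_norm_bounded C a hfi Filter.tendsto_id ?_
  filter_upwards [Filter.eventually_ge_atTop a] with b hb
  simp_rw [intervalIntegral.integral_of_le hb, Real.norm_of_nonneg (hf0 _)]
  exact hC b hb

section Agmon

variable {h : ℝ → ℝ} {R0 : ℝ}

lemma integrableOn_Icc_mul_exp (hL2 : IntegrableOn (fun s => h s ^ 2 * exp s) (Ici R0))
    (a b : ℝ) : IntegrableOn (fun s => h s ^ 2 * exp (a * s) * exp s) (Icc R0 b) := by
  refine IntegrableOn.congr_fun ((hL2.mono_set Icc_subset_Ici_self).mul_continuousOn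
    (g' := fun s => exp (a * s)) (by fun_prop) isCompact_Icc) (fun s _ => ?_) measurableSet_Icc
  ring

lemma setIntegral_Ioc_mul_exp_le {c k R : ℝ} (hc : 0 ≤ c) (hR0 : R0 ≤ R) (hk : k ≤ c * R)
    (hL2 : IntegrableOn (fun s => h s ^ 2 * exp s) (Ici R0)) :
    ∫ s in Ioc R (2 * R), h s ^ 2 * exp (2 * (k - c * s)) * exp s
      ≤ ∫ s in Ici R0, h s ^ 2 * exp s := by
  have hw1 : ∀ s ∈ Ioc R (2 * R), exp (2 * (k - c * s)) ≤ 1 := fun s hs => by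
    rw [exp_le_one_iff]
    nlinarith [mul_le_mul_of_nonneg_left hs.1.le hc]
  calc ∫ s in Ioc R (2 * R), h s ^ 2 * exp (2 * (k - c * s)) * exp s
      = ∫ s in Ioc R (2 * R), h s ^ 2 * exp s * exp (2 * (k - c * s)) := by
        congr 1 with s; ring
    _ ≤ ∫ s in Ici R0, h s ^ 2 * exp s :=
        setIntegral_mul_le_setIntegral_of_subset measurableSet_Ioc
          (fun s hs => hR0.trans hs.1.le) hL2 (fun s => by positivity) (fun s => by positivity)
          hw1

lemma mul_setIntegral_Ioc_le_setIntegral_agmonCutoff {m a T R : ℝ} (hm : 0 ≤ m) (hTR : T ≤ R)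
    (hR : 0 < R) (hL2 : IntegrableOn (fun s => h s ^ 2 * exp s) (Ici R0)) :
    m * ∫ s in Ioc (R0 + 1) T, h s ^ 2 * exp (a * s) * exp s
      ≤ ∫ s in Ioc R0 T, m * agmonCutoff R0 R s ^ 2 * h s ^ 2 * exp (a * s) * exp s := by
  have hφ : ∀ s, agmonCutoff R0 R s ^ 2 ≤ 1 := fun s =>
    pow_le_one₀ (agmonCutoff_mem_Icc hR s).1 (agmonCutoff_mem_Icc hR s).2
  have hint : IntegrableOn
      (fun s => m * agmonCutoff R0 R s ^ 2 * h s ^ 2 * exp (a * s) * exp s) (Ioc R0 T) := by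
    refine IntegrableOn.congr_fun (((integrableOn_Icc_mul_exp hL2 a T).mono_set Ioc_subset_Icc_self).bdd_mul (c := m)
      (((measurable_agmonCutoff R0 R).pow_const 2).const_mul m).aestronglyMeasurable
      (.of_forall fun s => ?_)) (fun s _ => by ring) measurableSet_Ioc
    rw [Real.norm_of_nonneg (by positivity)]
    exact mul_le_of_le_one_right hm (hφ s)
  calc m * ∫ s in Ioc (R0 + 1) T, h s ^ 2 * exp (a * s) * exp s
      = ∫ s in Ioc (R0 + 1) T, m * agmonCutoff R0 R s ^ 2 * h s ^ 2 * exp (a * s) * exp s := by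
        rw [← integral_const_mul]
        refine setIntegral_congr_fun measurableSet_Ioc fun s hs => ?_
        rw [agmonCutoff_eq_one hs.1 (hs.2.trans hTR)]
        ring
    _ ≤ _ := setIntegral_mono_set hint (.of_forall fun s => by positivity)
        (Ioc_subset_Ioc_left (by linarith)).eventuallyLE

lemma mul_setIntegral_Ioc_le_of_energy {m a c θ C T : ℝ} (hm : 0 ≤ m) (hc : 0 < c) (hθ : 0 < θ)
    (hT : R0 + 1 ≤ T) (hL2 : IntegrableOn (fun s => h s ^ 2 * exp s) (Ici R0))
    (hEnergy : ∀ k : ℝ, (R0 + 1) * θ * c ≤ k → ∀ R : ℝ, k / (θ * c) < R →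
      ∫ s in Ioc R0 (k / (θ * c)), m * agmonCutoff R0 R s ^ 2 * h s ^ 2 * exp (a * s) * exp s
        ≤ C + (1 / R ^ 2 + 2 * c / R)
          * ∫ s in Ioc R (2 * R), h s ^ 2 * exp (2 * (k - c * s)) * exp s) :
    m * ∫ s in Ioc (R0 + 1) T, h s ^ 2 * exp (a * s) * exp s
      ≤ C + ∫ s in Ici R0, h s ^ 2 * exp s := by
  set k := θ * c * T
  set R := max (max (T + 1) (θ * T)) (1 + 2 * c)
  have hTR : T < R := lt_of_lt_of_le (lt_add_one T) ((le_max_left _ _).trans (le_max_left _ _))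
  have hθTR : θ * T ≤ R := (le_max_right _ _).trans (le_max_left _ _)
  have hcR : 1 + 2 * c ≤ R := le_max_right _ _
  have hkT : k / (θ * c) = T := by
    rw [mul_div_cancel_left₀ T (mul_pos hθ hc).ne']
  have hk : (R0 + 1) * θ * c ≤ k := by
    rw [show k = T * θ * c by ring]
    gcongr
  have hkR : k ≤ c * R := by
    rw [show k = c * (θ * T) by ring]
    gcongr
  have hE := hEnergy k hk R (hkT ▸ hTR)
  rw [hkT] at hE
  have hB := setIntegral_Ioc_mul_exp_le hc.le (by linarith) hkR hL2
  have hB0 : 0 ≤ ∫ s in Ioc R (2 * R), h s ^ 2 * exp (2 * (k - c * s)) * exp s :=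
    setIntegral_nonneg measurableSet_Ioc fun s _ => by positivity
  calc m * ∫ s in Ioc (R0 + 1) T, h s ^ 2 * exp (a * s) * exp s
      ≤ ∫ s in Ioc R0 T, m * agmonCutoff R0 R s ^ 2 * h s ^ 2 * exp (a * s) * exp s :=
        mul_setIntegral_Ioc_le_setIntegral_agmonCutoff hm hTR.le (by linarith) hL2
    _ ≤ C + (1 / R ^ 2 + 2 * c / R)
          * ∫ s in Ioc R (2 * R), h s ^ 2 * exp (2 * (k - c * s)) * exp s := hE
    _ ≤ C + ∫ s in Ici R0, h s ^ 2 * exp s := by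
        gcongr
        exact (mul_le_of_le_one_left hB0 (one_div_sq_add_div_le_one hc.le hcR)).trans hB

end Agmon

theorem stmt19_general (lamess lam R0 CR0 : ℝ) (hlt : lam < lamess)
    (mu : ℝ) (hmu : mu = lamess - lam)
    (h : ℝ → ℝ)
    (hL2 : IntegrableOn (fun s => (h s) ^ 2 * exp s) (Set.Ici R0))
    (hEnergy : ∀ δ ∈ Set.Ioo (0:ℝ) 1,
      ∀ k : ℝ, (R0 + 1) * (1 + δ) * Real.sqrt mu ≤ k →
      ∀ R : ℝ, k / ((1 + δ) * Real.sqrt mu) < R →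
      ∫ s in Set.Ioc R0 (k / ((1 + δ) * Real.sqrt mu)),
          mu * (1 - δ ^ 2) * (agmonCutoff R0 R s) ^ 2 * (h s) ^ 2
            * exp (2 * δ * Real.sqrt mu * s) * exp s
        ≤ CR0 + (1 / R ^ 2 + 2 * Real.sqrt mu / R)
            * ∫ s in Set.Ioc R (2 * R),
                (h s) ^ 2 * exp (2 * (k - Real.sqrt mu * s)) * exp s) :
    ∀ δ ∈ Set.Ioo (0:ℝ) 1,
      IntegrableOn
        (fun s => (h s) ^ 2 * exp (2 * δ * Real.sqrt mu * s) * exp s)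
        (Set.Ici R0) := by
  rintro δ ⟨hδ0, hδ1⟩
  have hc : 0 < Real.sqrt mu := Real.sqrt_pos.mpr (by linarith)
  have hm : 0 < mu * (1 - δ ^ 2) := mul_pos (by linarith) (by nlinarith)
  have hint := integrableOn_Icc_mul_exp hL2 (2 * δ * Real.sqrt mu)
  have hbound : ∀ T, R0 + 1 ≤ T →
      ∫ s in Ioc (R0 + 1) T, h s ^ 2 * exp (2 * δ * Real.sqrt mu * s) * exp s
        ≤ (CR0 + ∫ s in Ici R0, h s ^ 2 * exp s) / (mu * (1 - δ ^ 2)) := fun T hT => by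
    rw [le_div_iff₀' hm]
    exact mul_setIntegral_Ioc_le_of_energy hm.le hc (by linarith) hT hL2 (hEnergy δ ⟨hδ0, hδ1⟩)
  have hIoi := integrableOn_Ioi_of_setIntegral_Ioc_le (fun s => by positivity)
    (fun b => (hint b).mono_set fun s hs => ⟨by linarith [hs.1], hs.2⟩) hbound
  rw [← Icc_union_Ioi_eq_Ici (by linarith : R0 ≤ R0 + 1)]
  exact (hint (R0 + 1)).union hIoi

/-- one-dimensional skeleton of the Agmon decay argument:
let `λ_ess > 0`, `λ < λ_ess`, `μ := λ_ess − λ`, and let `h` be weighted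
square-integrable on `[R₀,∞)` (`∫ h² eˢ ds < ∞`). If for every `δ ∈ (0,1)`,
`k ≥ (R₀+1)(1+δ)√μ` and `R > k/((1+δ)√μ)` the Agmon energy inequality
`∫_{R₀}^{k/((1+δ)√μ)} μ(1−δ²) φ² h² e^{2δ√μ s} eˢ ds
  ≤ C(R₀) + (1/R² + 2√μ/R) ∫_R^{2R} h² e^{2(k−√μ s)} eˢ ds`
holds (with `φ` the standard cutoff), then
`∫_{R₀}^∞ h² e^{2δ√μ s} eˢ ds < ∞` for every `δ ∈ (0,1)`. -/
theorem stmt19 (lamess lam R0 CR0 : ℝ) (hlamess : 0 < lamess) (hlt : lam < lamess)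
    (mu : ℝ) (hmu : mu = lamess - lam)
    (h : ℝ → ℝ) (hmeas : Measurable h)
    (hL2 : IntegrableOn (fun s => (h s) ^ 2 * exp s) (Set.Ici R0))
    (hEnergy : ∀ δ ∈ Set.Ioo (0:ℝ) 1,
      ∀ k : ℝ, (R0 + 1) * (1 + δ) * Real.sqrt mu ≤ k →
      ∀ R : ℝ, k / ((1 + δ) * Real.sqrt mu) < R →
      ∫ s in Set.Ioc R0 (k / ((1 + δ) * Real.sqrt mu)),
          mu * (1 - δ ^ 2) * (agmonCutoff R0 R s) ^ 2 * (h s) ^ 2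
            * exp (2 * δ * Real.sqrt mu * s) * exp s
        ≤ CR0 + (1 / R ^ 2 + 2 * Real.sqrt mu / R)
            * ∫ s in Set.Ioc R (2 * R),
                (h s) ^ 2 * exp (2 * (k - Real.sqrt mu * s)) * exp s) :
    ∀ δ ∈ Set.Ioo (0:ℝ) 1,
      IntegrableOn
        (fun s => (h s) ^ 2 * exp (2 * δ * Real.sqrt mu * s) * exp s)
        (Set.Ici R0) :=
  stmt19_general lamess lam R0 CR0 hlt mu hmu h hL2 hEnergy
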